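/- arXiv:2407.12288 — 5 statements merged into one kernel-verified Lean document; each statement's English description precedes it below -/
import Mathlib

section
/- Let T ≥ 1 and let θ, X_0,…,X_{T−1}, Y_1,…,Y_T be random variables on a common probability space taking values in finite sets. Assume (i) for every 0 ≤ t ≤ T−1, I(X_t ; θ | X_{0:t−1}, Y_{1:t}) = 0, and (ii) for every 0 ≤ t ≤ T−1, Y_{t+1} is conditionally independent of (X_{t+1},…,X_{T−1}) given (θ, X_{0:t}, Y_{1:t}). Then (1/T)·∑_{t=0}^{T−1} H(Y_{t+1} | X_{0:t}, Y_{1:t}) − (1/T)·H(Y_{1:T} | θ, X_{0:T−1}) = I(θ ; D_T)/T; that is, the optimal (Bayes) estimation error over horizon T equals the total information I(θ ; D_T)/T. -/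
/-!
A finite-valued random variable's entropy depends only on the partition of `Ω` into its level
sets, so every quantity in sight is the entropy of a meet of kernels. Write `F(s, r)` for the
entropy of `(θ, X_{<s}, Y_{<r})` and `E(s, r)` for that of `(X_{<s}, Y_{<r})`. The `t`-th
summand is `E(t+1, t+1) - E(t+1, t)`; hypothesis (i) says `E(t+1, t) - E(t, t)` equals
`F(t+1, t) - F(t, t)`, and (ii) says `F(t+1, t+1) - F(t+1, t)` equals `F(T, t+1) - F(T, t)`.
The summand thus becomes a sum of three increments, which telescope (with `E(0, 0) = 0`) to
`(E(T, T) - F(T, T) + F(0, 0)) + (F(T, T) - F(T, 0)) = I(θ; D_T) + H(Y_{1:T} | θ, X_{0:T-1})`.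
-/

open scoped Classical

noncomputable section

/-- Probability of the event `X = a` under the pmf `p` on a finite sample space. -/
def pr {Ω : Type*} [Fintype Ω] (p : Ω → ℝ) {A : Type*} (X : Ω → A) (a : A) : ℝ :=
  ∑ ω, if X ω = a then p ω else 0

/-- Shannon entropy of a random variable (in nats). -/
def entropy {Ω : Type*} [Fintype Ω] (p : Ω → ℝ) {A : Type*} [Fintype A] (X : Ω → A) : ℝ :=
  ∑ a, Real.negMulLog (pr p X a)

/-- Conditional entropy `H(X|Y) = H(X,Y) - H(Y)` (in nats). -/
def condEntropy {Ω : Type*} [Fintype Ω] (p : Ω → ℝ) {A B : Type*} [Fintype A] [Fintype B]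
    (X : Ω → A) (Y : Ω → B) : ℝ :=
  entropy p (fun ω => (X ω, Y ω)) - entropy p Y

/-- Mutual information `I(X;Y) = H(X) + H(Y) - H(X,Y)` (in nats). -/
def mutualInfo {Ω : Type*} [Fintype Ω] (p : Ω → ℝ) {A B : Type*} [Fintype A] [Fintype B]
    (X : Ω → A) (Y : Ω → B) : ℝ :=
  entropy p X + entropy p Y - entropy p (fun ω => (X ω, Y ω))

/-- Conditional mutual information `I(X;Y|Z) = H(X,Z) + H(Y,Z) - H(X,Y,Z) - H(Z)` (in nats). -/
def condMutualInfo {Ω : Type*} [Fintype Ω] (p : Ω → ℝ) {A B C : Type*}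
    [Fintype A] [Fintype B] [Fintype C] (X : Ω → A) (Y : Ω → B) (Z : Ω → C) : ℝ :=
  entropy p (fun ω => (X ω, Z ω)) + entropy p (fun ω => (Y ω, Z ω))
    - entropy p (fun ω => ((X ω, Y ω), Z ω)) - entropy p Z

/-- The history `H_t = (X_{0:t}, Y_{1:t})`, as a random variable. -/
def histRV {Ω 𝒳 𝒴 : Type*} {T : ℕ} (X : Fin T → Ω → 𝒳) (Y : Fin T → Ω → 𝒴)
    (t : Fin T) (ω : Ω) : (Fin ((t : ℕ) + 1) → 𝒳) × (Fin (t : ℕ) → 𝒴) :=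
  (fun i => X (Fin.castLE t.isLt i) ω, fun i => Y (Fin.castLE (le_of_lt t.isLt) i) ω)

/-- The past data `(X_{0:t-1}, Y_{1:t})` strictly before the input `X_t`. -/
def pastRV {Ω 𝒳 𝒴 : Type*} {T : ℕ} (X : Fin T → Ω → 𝒳) (Y : Fin T → Ω → 𝒴)
    (t : Fin T) (ω : Ω) : (Fin (t : ℕ) → 𝒳) × (Fin (t : ℕ) → 𝒴) :=
  (fun i => X (Fin.castLE (le_of_lt t.isLt) i) ω, fun i => Y (Fin.castLE (le_of_lt t.isLt) i) ω)

/-- The future inputs `(X_{t+1}, …, X_{T-1})`, as a random variable. -/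
def futureRV {Ω 𝒳 : Type*} {T : ℕ} (X : Fin T → Ω → 𝒳) (t : Fin T) (ω : Ω) :
    Fin (T - 1 - (t : ℕ)) → 𝒳 :=
  fun i => X ⟨(t : ℕ) + 1 + (i : ℕ), by have h1 := t.isLt; have h2 := i.isLt; omega⟩ ω

namespace Setoid

theorem ker_prodMk {α β γ : Type*} (f : α → β) (g : α → γ) :
    ker (fun a => (f a, g a)) = ker f ⊓ ker g :=
  ext fun _ _ => Prod.mk_inj

theorem iInf_iff {α : Type*} {ι : Sort*} (s : ι → Setoid α) (x y : α) :
    (⨅ i, s i) x y ↔ ∀ i, s i x y := by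
  rw [iInf, sInf_iff, Set.forall_mem_range]

end Setoid

section PartitionEntropy

variable {Ω : Type*} [Fintype Ω]

def partitionEntropy (p : Ω → ℝ) (s : Setoid Ω) : ℝ :=
  -∑ ω, p ω * Real.log (∑ ω' with s ω' ω, p ω')

theorem entropy_eq_partitionEntropy_ker (p : Ω → ℝ) {A : Type*} [Fintype A] (X : Ω → A) :
    entropy p X = partitionEntropy p (Setoid.ker X) := by
  have mass (ω : Ω) : pr p X (X ω) = ∑ ω' with X ω' = X ω, p ω' := by
    rw [pr, Finset.sum_filter]
  calc entropy p X = -∑ a, ∑ ω, if X ω = a then p ω * Real.log (pr p X a) else 0 := by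
        simp only [entropy, Real.negMulLog, pr, neg_mul, Finset.sum_neg_distrib, Finset.sum_mul,
          ite_mul, zero_mul]
    _ = partitionEntropy p (Setoid.ker X) := by
        rw [Finset.sum_comm]
        simp only [Finset.sum_ite_eq, Finset.mem_univ, if_true, mass, partitionEntropy,
          Setoid.ker_def]

theorem partitionEntropy_top (p : Ω → ℝ) (hp : ∑ ω, p ω = 1) :
    partitionEntropy p ⊤ = 0 := by
  simp [partitionEntropy, hp]

end PartitionEntropy

section Prefix

variable {Ω α : Type*} {T : ℕ}

def prefixKer (X : Fin T → Ω → α) (n : ℕ) : Setoid Ω :=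
  ⨅ (i : Fin T) (_ : (i : ℕ) < n), Setoid.ker (X i)

theorem prefixKer_apply (X : Fin T → Ω → α) (n : ℕ) (ω ω' : Ω) :
    prefixKer X n ω ω' ↔ ∀ i : Fin T, (i : ℕ) < n → X i ω = X i ω' := by
  rw [prefixKer, Setoid.iInf_iff]
  simp only [Setoid.iInf_iff, Setoid.ker_def]

theorem prefixKer_zero (X : Fin T → Ω → α) : prefixKer X 0 = ⊤ :=
  Setoid.eq_top_iff.mpr fun _ _ =>
    (prefixKer_apply X 0 _ _).mpr fun _ hi => (Nat.not_lt_zero _ hi).elim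

theorem prefixKer_succ (X : Fin T → Ω → α) (t : Fin T) :
    prefixKer X (t + 1) = Setoid.ker (X t) ⊓ prefixKer X t :=
  Setoid.ext fun ω ω' => by
    simp only [Setoid.inf_iff_and, prefixKer_apply, Setoid.ker_def]
    constructor
    · intro h
      exact ⟨h t (Nat.lt_succ_self _), fun i hi => h i (Nat.lt_succ_of_lt hi)⟩
    · rintro ⟨ht, h⟩ i hi
      rcases Nat.lt_succ_iff_lt_or_eq.mp hi with hi | hi
      · exact h i hi
      · rwa [Fin.ext hi]

theorem ker_castLE (X : Fin T → Ω → α) {n : ℕ} (h : n ≤ T) :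
    Setoid.ker (fun ω (i : Fin n) => X (Fin.castLE h i) ω) = prefixKer X n :=
  Setoid.ext fun ω ω' => by
    simp only [Setoid.ker_def, prefixKer_apply, funext_iff]
    exact ⟨fun H i hi => H ⟨i, hi⟩, fun H i => H _ i.isLt⟩

theorem ker_pi_eq_prefixKer (X : Fin T → Ω → α) :
    Setoid.ker (fun ω (i : Fin T) => X i ω) = prefixKer X T :=
  ker_castLE X le_rfl

theorem prefixKer_succ_inf_ker_futureRV (X : Fin T → Ω → α) (t : Fin T) :
    prefixKer X (t + 1) ⊓ Setoid.ker (futureRV X t) = prefixKer X T :=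
  Setoid.ext fun ω ω' => by
    simp only [Setoid.inf_iff_and, prefixKer_apply, Setoid.ker_def, futureRV, funext_iff]
    constructor
    · rintro ⟨hpast, hfuture⟩ i -
      by_cases hi : (i : ℕ) < t + 1
      · exact hpast i hi
      · simpa [show (t : ℕ) + 1 + (i - (t + 1)) = i by omega] using
          hfuture ⟨i - (t + 1), by omega⟩
    · exact fun h => ⟨fun i _ => h i i.isLt, fun j => h _ (Fin.isLt _)⟩

variable {β : Type*}

theorem ker_histRV (X : Fin T → Ω → α) (Y : Fin T → Ω → β) (t : Fin T) :
    Setoid.ker (histRV X Y t) = prefixKer X (t + 1) ⊓ prefixKer Y t :=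
  (Setoid.ker_prodMk _ _).trans (by rw [ker_castLE, ker_castLE])

theorem ker_pastRV (X : Fin T → Ω → α) (Y : Fin T → Ω → β) (t : Fin T) :
    Setoid.ker (pastRV X Y t) = prefixKer X t ⊓ prefixKer Y t :=
  (Setoid.ker_prodMk _ _).trans (by rw [ker_castLE, ker_castLE])

end Prefix

section Chain

variable {Ω Θ 𝒳 𝒴 : Type*} [Fintype Ω] (p : Ω → ℝ) {T : ℕ}
  (θ : Ω → Θ) (X : Fin T → Ω → 𝒳) (Y : Fin T → Ω → 𝒴)

/-- `H(Z, X_{<s}, Y_{<r})`, the extra variable `Z` given by its partition (`⊤` for none). -/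
def prefixEntropy (Z : Setoid Ω) (s r : ℕ) : ℝ :=
  partitionEntropy p (Z ⊓ (prefixKer X s ⊓ prefixKer Y r))

theorem prefixEntropy_top_zero_zero (hp : ∑ ω, p ω = 1) : prefixEntropy p X Y ⊤ 0 0 = 0 := by
  simp only [prefixEntropy, prefixKer_zero, inf_top_eq, partitionEntropy_top p hp]

variable [Fintype Θ] [Fintype 𝒳] [Fintype 𝒴]

theorem condEntropy_histRV (t : Fin T) :
    condEntropy p (Y t) (histRV X Y t)
      = prefixEntropy p X Y ⊤ (t + 1) (t + 1) - prefixEntropy p X Y ⊤ (t + 1) t := by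
  simp only [condEntropy, prefixEntropy, entropy_eq_partitionEntropy_ker, Setoid.ker_prodMk,
    ker_histRV, prefixKer_succ Y, top_inf_eq]
  simp only [inf_comm, inf_left_comm, inf_assoc]

theorem condMutualInfo_pastRV (t : Fin T) :
    condMutualInfo p (X t) θ (pastRV X Y t)
      = (prefixEntropy p X Y ⊤ (t + 1) t - prefixEntropy p X Y ⊤ t t)
        - (prefixEntropy p X Y (Setoid.ker θ) (t + 1) t
          - prefixEntropy p X Y (Setoid.ker θ) t t) := by
  simp only [condMutualInfo, prefixEntropy, entropy_eq_partitionEntropy_ker, Setoid.ker_prodMk,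
    ker_pastRV, prefixKer_succ X, top_inf_eq]
  simp only [inf_comm, inf_left_comm, inf_assoc]
  ring

theorem condMutualInfo_futureRV (t : Fin T) :
    condMutualInfo p (Y t) (futureRV X t) (fun ω => (θ ω, histRV X Y t ω))
      = (prefixEntropy p X Y (Setoid.ker θ) (t + 1) (t + 1)
          - prefixEntropy p X Y (Setoid.ker θ) (t + 1) t)
        - (prefixEntropy p X Y (Setoid.ker θ) T (t + 1)
          - prefixEntropy p X Y (Setoid.ker θ) T t) := by
  simp only [condMutualInfo, prefixEntropy, entropy_eq_partitionEntropy_ker, Setoid.ker_prodMk,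
    ker_histRV, ← prefixKer_succ_inf_ker_futureRV X t]
  simp only [prefixKer_succ Y, inf_comm, inf_left_comm, inf_assoc]
  ring

theorem condEntropy_labels_inputs :
    condEntropy p (fun ω => (fun i : Fin T => Y i ω)) (fun ω => (θ ω, fun i : Fin T => X i ω))
      = prefixEntropy p X Y (Setoid.ker θ) T T - prefixEntropy p X Y (Setoid.ker θ) T 0 := by
  simp only [condEntropy, prefixEntropy, entropy_eq_partitionEntropy_ker, Setoid.ker_prodMk,
    ker_pi_eq_prefixKer, prefixKer_zero, inf_top_eq]
  simp only [inf_comm, inf_left_comm, inf_assoc]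

theorem mutualInfo_data :
    mutualInfo p θ (fun ω => ((fun i : Fin T => X i ω), (fun i : Fin T => Y i ω)))
      = prefixEntropy p X Y (Setoid.ker θ) 0 0 + prefixEntropy p X Y ⊤ T T
        - prefixEntropy p X Y (Setoid.ker θ) T T := by
  simp only [mutualInfo, prefixEntropy, entropy_eq_partitionEntropy_ker, Setoid.ker_prodMk,
    ker_pi_eq_prefixKer, prefixKer_zero, inf_top_eq, top_inf_eq]

end Chain

theorem statement0_general {Ω Θ 𝒳 𝒴 : Type*} [Fintype Ω] [Fintype Θ] [Fintype 𝒳] [Fintype 𝒴]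
    (p : Ω → ℝ) (hp1 : ∑ ω, p ω = 1)
    (T : ℕ)
    (θ : Ω → Θ) (X : Fin T → Ω → 𝒳) (Y : Fin T → Ω → 𝒴)
    (hinput : ∀ t : Fin T, condMutualInfo p (X t) θ (pastRV X Y t) = 0)
    (hlabel : ∀ t : Fin T, condMutualInfo p (Y t) (futureRV X t)
      (fun ω => (θ ω, histRV X Y t ω)) = 0) :
    (1 / (T : ℝ)) * (∑ t : Fin T, condEntropy p (Y t) (histRV X Y t))
        - condEntropy p (fun ω => (fun i : Fin T => Y i ω))
            (fun ω => (θ ω, fun i : Fin T => X i ω)) / (T : ℝ)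
      = mutualInfo p θ
          (fun ω => ((fun i : Fin T => X i ω), (fun i : Fin T => Y i ω))) / (T : ℝ) := by
  rw [condEntropy_labels_inputs, mutualInfo_data]
  have entropy_empty : prefixEntropy p X Y ⊤ 0 0 = 0 := prefixEntropy_top_zero_zero p X Y hp1
  set E := prefixEntropy p X Y ⊤
  set F := prefixEntropy p X Y (Setoid.ker θ)
  have step (t : Fin T) : condEntropy p (Y t) (histRV X Y t)
      = (E (t + 1) (t + 1) - E t t) - (F (t + 1) (t + 1) - F t t) + (F T (t + 1) - F T t) := by
    have hin := condMutualInfo_pastRV p θ X Y t ▸ hinput t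
    have hlab := condMutualInfo_futureRV p θ X Y t ▸ hlabel t
    rw [condEntropy_histRV]
    linarith
  have telescope (f : ℕ → ℝ) : ∑ t : Fin T, (f (t + 1) - f t) = f T - f 0 := by
    rw [Fin.sum_univ_eq_sum_range (fun t => f (t + 1) - f t), Finset.sum_range_sub]
  have chain : ∑ t : Fin T, condEntropy p (Y t) (histRV X Y t)
      = (E T T - E 0 0) - (F T T - F 0 0) + (F T T - F T 0) := by
    rw [Finset.sum_congr rfl fun t _ => step t, Finset.sum_add_distrib, Finset.sum_sub_distrib,
      telescope (fun n => E n n), telescope (fun n => F n n), telescope (F T)]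
  rw [chain, entropy_empty]
  ring

/-- optimal error equals total information. -/
theorem statement0 {Ω Θ 𝒳 𝒴 : Type*} [Fintype Ω] [Fintype Θ] [Fintype 𝒳] [Fintype 𝒴]
    (p : Ω → ℝ) (hp0 : ∀ ω, 0 ≤ p ω) (hp1 : ∑ ω, p ω = 1)
    (T : ℕ) (hT : 1 ≤ T)
    (θ : Ω → Θ) (X : Fin T → Ω → 𝒳) (Y : Fin T → Ω → 𝒴)
    (hinput : ∀ t : Fin T, condMutualInfo p (X t) θ (pastRV X Y t) = 0)
    (hlabel : ∀ t : Fin T, condMutualInfo p (Y t) (futureRV X t)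
      (fun ω => (θ ω, histRV X Y t ω)) = 0) :
    (1 / (T : ℝ)) * (∑ t : Fin T, condEntropy p (Y t) (histRV X Y t))
        - condEntropy p (fun ω => (fun i : Fin T => Y i ω))
            (fun ω => (θ ω, fun i : Fin T => X i ω)) / (T : ℝ)
      = mutualInfo p θ
          (fun ω => ((fun i : Fin T => X i ω), (fun i : Fin T => Y i ω))) / (T : ℝ) :=
  statement0_general p hp1 T θ X Y hinput hlabel

end
end

section
/- Let T ≥ 1 and let θ, X_0,…,X_{T−1}, Y_1,…,Y_T be finite-valued random variables with I(X_t ; θ | X_{0:t−1}, Y_{1:t}) = 0 for all 0 ≤ t ≤ T−1. For each t let P*_t denote the conditional pmf of Y_{t+1} given (θ, H_t), let P̂_t denote the conditional pmf of Y_{t+1} given H_t (the Bayesian posterior predictive), and let P̃_t be any function assigning to each realization of H_t a probability mass function on the label alphabet. Then, as an identity in [0,∞]: (1/T)·∑_{t=0}^{T−1} E[ D_KL( P*_t ‖ P̃_t(H_t) ) ] = I(θ ; D_T)/T + (1/T)·∑_{t=0}^{T−1} E[ D_KL( P̂_t ‖ P̃_t(H_t) ) ]. That is, the loss of an arbitrary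 history-measurable predictive algorithm equals the optimal error plus a misspecification error term. -/
/-!
Per round, write `P* = P(Y_{t+1} | θ, H_t)`, `P̂ = P(Y_{t+1} | H_t)` and `P̃` for the algorithm.
Evaluated at the realised label, the log-likelihood ratio splits pointwise as
`log (P* / P̃) = log (P* / P̂) + log (P̂ / P̃)`; by the tower property the expectations of the
three terms are `E[KL(P* ‖ P̃)]`, `I(θ; Y_{t+1} | H_t)` and `E[KL(P̂ ‖ P̃)]`. When `P̃` misses
part of the support of `P̂` it also misses part of the support of `P*`, and both sides are `∞`.
Summing over rounds, the chain rule telescopes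
`∑_t (I(X_t; θ | X_{0:t-1}, Y_{1:t}) + I(θ; Y_{t+1} | H_t)) = I(θ; D_T)`, and the input terms
vanish by hypothesis.
-/

open scoped Classical ENNReal

noncomputable section

/-- Conditional pmf of `Y` given `X = a`, evaluated at `b` (with the convention `0/0 = 0`). -/
def condPr {Ω : Type*} [Fintype Ω] (p : Ω → ℝ) {A B : Type*}
    (Y : Ω → B) (X : Ω → A) (b : B) (a : A) : ℝ :=
  pr p (fun ω => (Y ω, X ω)) (b, a) / pr p X a

/-- KL divergence between pmfs on a finite set, valued in `[0,∞]`. -/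
def klDivF {A : Type*} [Fintype A] (p q : A → ℝ) : ℝ≥0∞ :=
  if ∀ a, q a = 0 → p a = 0 then ENNReal.ofReal (∑ a, p a * Real.log (p a / q a)) else ⊤

section Probability

variable {Ω : Type*} [Fintype Ω] {p : Ω → ℝ}

lemma pr_nonneg (hp0 : ∀ ω, 0 ≤ p ω) {A : Type*} (X : Ω → A) (a : A) : 0 ≤ pr p X a :=
  Finset.sum_nonneg fun ω _ => by split_ifs <;> simp [hp0 ω]

lemma pr_mono (hp0 : ∀ ω, 0 ≤ p ω) {A A' : Type*} {X : Ω → A} {X' : Ω → A'} {a : A} {a' : A'}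
    (h : ∀ ω, X ω = a → X' ω = a') : pr p X a ≤ pr p X' a' :=
  Finset.sum_le_sum fun ω _ => by
    by_cases hX : X ω = a
    · simp [hX, h ω hX]
    · simp only [if_neg hX]; split_ifs <;> simp [hp0 ω]

lemma pr_eq_zero_of_imp (hp0 : ∀ ω, 0 ≤ p ω) {A A' : Type*} {X : Ω → A} {X' : Ω → A'}
    {a : A} {a' : A'} (h : ∀ ω, X ω = a → X' ω = a') (h0 : pr p X' a' = 0) : pr p X a = 0 :=
  le_antisymm (h0 ▸ pr_mono hp0 h) (pr_nonneg hp0 _ _)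

lemma pr_pos (hp0 : ∀ ω, 0 ≤ p ω) {A : Type*} (X : Ω → A) {ω : Ω} (hω : 0 < p ω) :
    0 < pr p X (X ω) :=
  hω.trans_le <| by
    simpa [pr] using Finset.single_le_sum (f := fun ω' => if X ω' = X ω then p ω' else 0)
      (fun ω' _ => by split_ifs <;> simp [hp0 ω']) (Finset.mem_univ ω)

lemma exists_pos_of_pr_ne_zero (hp0 : ∀ ω, 0 ≤ p ω) {A : Type*} {X : Ω → A} {a : A}
    (h : pr p X a ≠ 0) : ∃ ω, 0 < p ω ∧ X ω = a := by
  obtain ⟨ω, -, hω⟩ := Finset.exists_ne_zero_of_sum_ne_zero h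
  by_cases hX : X ω = a
  · rw [if_pos hX] at hω
    exact ⟨ω, (hp0 ω).lt_of_ne' hω, hX⟩
  · exact absurd (if_neg hX) hω

lemma sum_pr_mul {A : Type*} [Fintype A] (X : Ω → A) (f : A → ℝ) :
    ∑ a, pr p X a * f a = ∑ ω, p ω * f (X ω) := by
  simp only [pr, Finset.sum_mul, ite_mul, zero_mul]
  rw [Finset.sum_comm]
  simp

lemma pr_apply_eq_of_fibers {A A' : Type*} {X : Ω → A} {X' : Ω → A'}
    (h : ∀ ω ω', X ω = X ω' ↔ X' ω = X' ω') (ω : Ω) : pr p X (X ω) = pr p X' (X' ω) :=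
  Finset.sum_congr rfl fun ω' _ => if_congr (h ω' ω) rfl rfl

lemma sum_pr_pair {A B : Type*} [Fintype B] (Y : Ω → B) (X : Ω → A) (a : A) :
    ∑ b, pr p (fun ω => (Y ω, X ω)) (b, a) = pr p X a := by
  simp only [pr, Prod.mk.injEq, ite_and]
  rw [Finset.sum_comm]
  simp

lemma entropy_eq_sum {A : Type*} [Fintype A] (X : Ω → A) :
    entropy p X = ∑ ω, p ω * -Real.log (pr p X (X ω)) := by
  rw [entropy, ← sum_pr_mul X fun a => -Real.log (pr p X a)]
  exact Finset.sum_congr rfl fun a _ => by rw [Real.negMulLog]; ring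

lemma entropy_eq_of_fibers {A A' : Type*} [Fintype A] [Fintype A'] {X : Ω → A} {X' : Ω → A'}
    (h : ∀ ω ω', X ω = X ω' ↔ X' ω = X' ω') : entropy p X = entropy p X' := by
  simp only [entropy_eq_sum, pr_apply_eq_of_fibers h]

lemma entropy_const (hp1 : ∑ ω, p ω = 1) {A : Type*} [Fintype A] (a : A) :
    entropy p (fun _ : Ω => a) = 0 := by
  simp [entropy_eq_sum, pr, hp1]

variable {B D : Type*}

lemma condPr_nonneg (hp0 : ∀ ω, 0 ≤ p ω) (Y : Ω → B) (W : Ω → D) (b : B) (w : D) :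
    0 ≤ condPr p Y W b w :=
  div_nonneg (pr_nonneg hp0 _ _) (pr_nonneg hp0 _ _)

lemma condPr_pos (hp0 : ∀ ω, 0 ≤ p ω) (Y : Ω → B) (W : Ω → D) {ω : Ω} (hω : 0 < p ω) :
    0 < condPr p Y W (Y ω) (W ω) :=
  div_pos (pr_pos hp0 (fun ω => (Y ω, W ω)) hω) (pr_pos hp0 W hω)

lemma sum_condPr [Fintype B] (Y : Ω → B) (W : Ω → D) {w : D} (hw : pr p W w ≠ 0) :
    ∑ b, condPr p Y W b w = 1 := by
  simp only [condPr, ← Finset.sum_div, sum_pr_pair, div_self hw]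

lemma pr_mul_condPr (hp0 : ∀ ω, 0 ≤ p ω) (Y : Ω → B) (W : Ω → D) (b : B) (w : D) :
    pr p W w * condPr p Y W b w = pr p (fun ω => (Y ω, W ω)) (b, w) := by
  rcases eq_or_ne (pr p W w) 0 with hw | hw
  · rw [hw, zero_mul, pr_eq_zero_of_imp hp0 (fun ω h => (Prod.mk.inj h).2) hw]
  · exact mul_div_cancel₀ _ hw

/-- The tower property `E[E[g(W, Y) | W]] = E[g(W, Y)]`. -/
lemma sum_mul_sum_condPr_mul (hp0 : ∀ ω, 0 ≤ p ω) [Fintype B] [Fintype D] (Y : Ω → B)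
    (W : Ω → D) (g : D → B → ℝ) :
    ∑ ω, p ω * ∑ b, condPr p Y W b (W ω) * g (W ω) b = ∑ ω, p ω * g (W ω) (Y ω) := by
  calc ∑ ω, p ω * ∑ b, condPr p Y W b (W ω) * g (W ω) b
      = ∑ w, pr p W w * ∑ b, condPr p Y W b w * g w b :=
        (sum_pr_mul W fun w => ∑ b, condPr p Y W b w * g w b).symm
    _ = ∑ x : B × D, pr p (fun ω => (Y ω, W ω)) x * g x.2 x.1 := by
      simp only [Finset.mul_sum, ← mul_assoc, pr_mul_condPr hp0, Fintype.sum_prod_type]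
      exact Finset.sum_comm
    _ = ∑ ω, p ω * g (W ω) (Y ω) := sum_pr_mul (fun ω => (Y ω, W ω)) fun x => g x.2 x.1

lemma condPr_pair_eq_zero_of_condPr_eq_zero (hp0 : ∀ ω, 0 ≤ p ω) {A C : Type*}
    (A' : Ω → A) (Y : Ω → B) (C' : Ω → C) {a : A} {b : B} {c : C}
    (h : condPr p Y C' b c = 0) : condPr p Y (fun ω => (A' ω, C' ω)) b (a, c) = 0 := by
  rcases div_eq_zero_iff.1 h with h | h
  · rw [condPr, pr_eq_zero_of_imp hp0 (fun ω hω => by simp_all [Prod.ext_iff]) h, zero_div]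
  · rw [condPr, pr_eq_zero_of_imp hp0 (fun ω hω => (Prod.mk.inj hω).2) h, div_zero]

end Probability

def klSum {A : Type*} [Fintype A] (f q : A → ℝ) : ℝ :=
  ∑ a, f a * Real.log (f a / q a)

section KL

variable {A : Type*} [Fintype A] {f q : A → ℝ}

lemma klDivF_of_support (h : ∀ a, q a = 0 → f a = 0) :
    klDivF f q = ENNReal.ofReal (klSum f q) :=
  if_pos h

lemma klDivF_eq_top {a : A} (hq : q a = 0) (hf : f a ≠ 0) : klDivF f q = ⊤ :=
  if_neg fun h => hf (h a hq)

/-- Gibbs' inequality, via `f log (f / q) ≥ f - q`. -/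
lemma klSum_nonneg (hf0 : ∀ a, 0 ≤ f a) (hq0 : ∀ a, 0 ≤ q a) (hf1 : ∑ a, f a = 1)
    (hq1 : ∑ a, q a ≤ 1) (h : ∀ a, q a = 0 → f a = 0) : 0 ≤ klSum f q := by
  have pointwise (a : A) : f a - q a ≤ f a * Real.log (f a / q a) := by
    rcases (hf0 a).eq_or_lt with hfa | hfa
    · simp [← hfa, hq0 a]
    · have hqa : 0 < q a := (hq0 a).lt_of_ne' fun hqa => hfa.ne' (h a hqa)
      have := Real.one_sub_inv_le_log_of_pos (div_pos hfa hqa)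
      rw [inv_div] at this
      calc f a - q a = f a * (1 - q a / f a) := by field_simp
        _ ≤ f a * Real.log (f a / q a) := mul_le_mul_of_nonneg_left this hfa.le
  calc 0 ≤ ∑ a, (f a - q a) := by rw [Finset.sum_sub_distrib]; linarith
    _ ≤ klSum f q := Finset.sum_le_sum fun a _ => pointwise a

end KL

section Information

variable {Ω : Type*} [Fintype Ω] {p : Ω → ℝ} {A B C D : Type*} [Fintype A] [Fintype B]
  [Fintype C]

lemma sum_ofReal_mul_klDivF (hp0 : ∀ ω, 0 ≤ p ω) (f q : Ω → B → ℝ)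
    (hsupp : ∀ ω, 0 < p ω → ∀ b, q ω b = 0 → f ω b = 0)
    (hnn : ∀ ω, 0 < p ω → 0 ≤ klSum (f ω) (q ω)) :
    ∑ ω, ENNReal.ofReal (p ω) * klDivF (f ω) (q ω)
      = ENNReal.ofReal (∑ ω, p ω * klSum (f ω) (q ω)) := by
  have term (ω : Ω) : ENNReal.ofReal (p ω) * klDivF (f ω) (q ω)
      = ENNReal.ofReal (p ω * klSum (f ω) (q ω)) ∧ 0 ≤ p ω * klSum (f ω) (q ω) := by
    rcases (hp0 ω).eq_or_lt with h | h
    · simp [← h]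
    · rw [klDivF_of_support (hsupp ω h), ENNReal.ofReal_mul (hp0 ω)]
      exact ⟨rfl, mul_nonneg h.le (hnn ω h)⟩
  rw [ENNReal.ofReal_sum_of_nonneg fun ω _ => (term ω).2]
  exact Finset.sum_congr rfl fun ω _ => (term ω).1

lemma klSum_condPr_nonneg (hp0 : ∀ ω, 0 ≤ p ω) (Y : Ω → B) (W : Ω → D) {ω : Ω}
    (hω : 0 < p ω) {q : B → ℝ} (hq0 : ∀ b, 0 ≤ q b) (hq1 : ∑ b, q b ≤ 1)
    (h : ∀ b, q b = 0 → condPr p Y W b (W ω) = 0) :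
    0 ≤ klSum (fun b => condPr p Y W b (W ω)) q :=
  klSum_nonneg (condPr_nonneg hp0 Y W · _) hq0 (sum_condPr Y W (pr_pos hp0 W hω).ne') hq1 h

lemma sum_mul_klSum_condPr [Fintype D] (hp0 : ∀ ω, 0 ≤ p ω) (Y : Ω → B) (W : Ω → D) (Q : D → B → ℝ) :
    ∑ ω, p ω * klSum (fun b => condPr p Y W b (W ω)) (Q (W ω))
      = ∑ ω, p ω * Real.log (condPr p Y W (Y ω) (W ω) / Q (W ω) (Y ω)) :=
  sum_mul_sum_condPr_mul hp0 Y W fun w b => Real.log (condPr p Y W b w / Q w b)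

lemma condMutualInfo_eq_sum_log (hp0 : ∀ ω, 0 ≤ p ω) (A' : Ω → A) (Y : Ω → B) (C' : Ω → C) :
    condMutualInfo p A' Y C' = ∑ ω, p ω * Real.log
      (condPr p Y (fun ω => (A' ω, C' ω)) (Y ω) (A' ω, C' ω) / condPr p Y C' (Y ω) (C' ω)) := by
  simp only [condMutualInfo, entropy_eq_sum, ← Finset.sum_sub_distrib, ← Finset.sum_add_distrib]
  refine Finset.sum_congr rfl fun ω _ => ?_
  rcases (hp0 ω).eq_or_lt with h | h
  · simp [← h]
  · rw [pr_apply_eq_of_fibers (X := fun ω => ((A' ω, Y ω), C' ω)) (X' := fun ω => (Y ω, (A' ω, C' ω)))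
      (fun _ _ => by simp only [Prod.mk.injEq]; tauto)]
    have hYAC := pr_pos hp0 (fun ω => (Y ω, (A' ω, C' ω))) h
    have hAC := pr_pos hp0 (fun ω => (A' ω, C' ω)) h
    have hYC := pr_pos hp0 (fun ω => (Y ω, C' ω)) h
    have hC := pr_pos hp0 C' h
    simp only [condPr]
    rw [Real.log_div (div_pos hYAC hAC).ne' (div_pos hYC hC).ne', Real.log_div hYAC.ne' hAC.ne',
      Real.log_div hYC.ne' hC.ne']
    ring

lemma condMutualInfo_nonneg (hp0 : ∀ ω, 0 ≤ p ω) (A' : Ω → A) (Y : Ω → B) (C' : Ω → C) :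
    0 ≤ condMutualInfo p A' Y C' := by
  rw [condMutualInfo_eq_sum_log hp0,
    ← sum_mul_klSum_condPr hp0 Y (fun ω => (A' ω, C' ω)) fun w b => condPr p Y C' b w.2]
  refine Finset.sum_nonneg fun ω _ => ?_
  rcases (hp0 ω).eq_or_lt with h | h
  · simp [← h]
  · exact mul_nonneg h.le <| klSum_condPr_nonneg hp0 _ _ h (condPr_nonneg hp0 Y C' · _)
      (sum_condPr Y C' (pr_pos hp0 C' h).ne').le
      fun b hb => condPr_pair_eq_zero_of_condPr_eq_zero hp0 A' Y C' hb


lemma sum_mul_klSum_condPr_pair (hp0 : ∀ ω, 0 ≤ p ω) (A' : Ω → A) (Y : Ω → B) (C' : Ω → C)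
    (Q : C → B → ℝ) (hQ : ∀ ω, 0 < p ω → Q (C' ω) (Y ω) ≠ 0) :
    ∑ ω, p ω * klSum (fun b => condPr p Y (fun ω' => (A' ω', C' ω')) b (A' ω, C' ω)) (Q (C' ω))
      = condMutualInfo p A' Y C'
        + ∑ ω, p ω * klSum (fun b => condPr p Y C' b (C' ω)) (Q (C' ω)) := by
  rw [sum_mul_klSum_condPr hp0 Y (fun ω => (A' ω, C' ω)) fun w => Q w.2,
    sum_mul_klSum_condPr hp0 Y C' Q, condMutualInfo_eq_sum_log hp0, ← Finset.sum_add_distrib]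
  refine Finset.sum_congr rfl fun ω _ => ?_
  rcases (hp0 ω).eq_or_lt with h | h
  · simp [← h]
  · have hYAC := condPr_pos hp0 Y (fun ω => (A' ω, C' ω)) h
    have hYC := condPr_pos hp0 Y C' h
    rw [← mul_add, Real.log_div hYAC.ne' (hQ ω h), Real.log_div hYAC.ne' hYC.ne',
      Real.log_div hYC.ne' (hQ ω h)]
    ring

theorem sum_ofReal_mul_klDivF_condPr_pair (hp0 : ∀ ω, 0 ≤ p ω) (A' : Ω → A) (Y : Ω → B)
    (C' : Ω → C) (Q : C → B → ℝ) (hQ : ∀ c, (∀ b, 0 ≤ Q c b) ∧ ∑ b, Q c b = 1) :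
    ∑ ω, ENNReal.ofReal (p ω) *
        klDivF (fun b => condPr p Y (fun ω' => (A' ω', C' ω')) b (A' ω, C' ω)) (Q (C' ω))
      = ENNReal.ofReal (condMutualInfo p A' Y C')
        + ∑ ω, ENNReal.ofReal (p ω) * klDivF (fun b => condPr p Y C' b (C' ω)) (Q (C' ω)) := by
  by_cases hsupp : ∀ ω, 0 < p ω → ∀ b, Q (C' ω) b = 0 → condPr p Y C' b (C' ω) = 0
  · have hsupp_pair (ω : Ω) (hω : 0 < p ω) (b : B) (hb : Q (C' ω) b = 0) :
        condPr p Y (fun ω' => (A' ω', C' ω')) b (A' ω, C' ω) = 0 :=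
      condPr_pair_eq_zero_of_condPr_eq_zero hp0 A' Y C' (hsupp ω hω b hb)
    have hnn (ω : Ω) (hω : 0 < p ω) :
        0 ≤ klSum (fun b => condPr p Y C' b (C' ω)) (Q (C' ω)) :=
      klSum_condPr_nonneg hp0 Y C' hω (hQ _).1 (hQ _).2.le (hsupp ω hω)
    have hnn_pair (ω : Ω) (hω : 0 < p ω) :
        0 ≤ klSum (fun b => condPr p Y (fun ω' => (A' ω', C' ω')) b (A' ω, C' ω)) (Q (C' ω)) :=
      klSum_condPr_nonneg hp0 Y _ hω (hQ _).1 (hQ _).2.le (hsupp_pair ω hω)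
    have hQ_pos (ω : Ω) (hω : 0 < p ω) : Q (C' ω) (Y ω) ≠ 0 :=
      fun hq => (condPr_pos hp0 Y C' hω).ne' (hsupp ω hω _ hq)
    rw [sum_ofReal_mul_klDivF hp0 _ _ hsupp_pair hnn_pair, sum_ofReal_mul_klDivF hp0 _ _ hsupp hnn,
      sum_mul_klSum_condPr_pair hp0 A' Y C' Q hQ_pos,
      ENNReal.ofReal_add (condMutualInfo_nonneg hp0 A' Y C') (Finset.sum_nonneg fun ω _ => ?_)]
    rcases (hp0 ω).eq_or_lt with h | h
    · simp [← h]
    · exact mul_nonneg h.le (hnn ω h)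
  · push Not at hsupp
    obtain ⟨ω, hω, b, hq, hb⟩ := hsupp
    obtain ⟨ω', hω', hω'b⟩ := exists_pos_of_pr_ne_zero hp0 (div_ne_zero_iff.1 hb).1
    obtain ⟨rfl, hC⟩ := Prod.mk.inj hω'b
    have top_of_term {f : Ω → ℝ≥0∞} (ω₀ : Ω) (h : f ω₀ = ⊤) : ∑ ω, f ω = ⊤ :=
      ENNReal.sum_eq_top.2 ⟨ω₀, Finset.mem_univ _, h⟩
    rw [top_of_term ω' (by
        rw [klDivF_eq_top (a := Y ω') (hC ▸ hq) ?_, ENNReal.mul_top (ENNReal.ofReal_pos.2 hω').ne']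
        exact (condPr_pos hp0 Y (fun ω => (A' ω, C' ω)) hω').ne'),
      top_of_term ω (by rw [klDivF_eq_top hq hb, ENNReal.mul_top (ENNReal.ofReal_pos.2 hω).ne']),
      add_top]

end Information

section ChainRule

variable {Ω Θ 𝒳 𝒴 : Type*} {T : ℕ}

/-- `D_k = (X_0, Y_1, …, X_{k-1}, Y_k)`, padded with `none` beyond `k` so that all prefixes
share one type. -/
def prefixRV (X : Fin T → Ω → 𝒳) (Y : Fin T → Ω → 𝒴) (k : ℕ) (ω : Ω) :
    Fin T → Option (𝒳 × 𝒴) :=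
  fun i => if (i : ℕ) < k then some (X i ω, Y i ω) else none

lemma castLE_comp_eq_iff {α : Type*} {k : ℕ} (h : k ≤ T) (Z : Fin T → Ω → α) (ω ω' : Ω) :
    (fun i : Fin k => Z (Fin.castLE h i) ω) = (fun i => Z (Fin.castLE h i) ω')
      ↔ ∀ i : Fin T, (i : ℕ) < k → Z i ω = Z i ω' := by
  constructor
  · intro hZ i hi
    simpa using congrFun hZ ⟨i, hi⟩
  · intro hZ
    funext i
    exact hZ _ (by simp)

lemma forall_val_lt_succ_iff (t : Fin T) (P : Fin T → Prop) :
    (∀ i : Fin T, (i : ℕ) < t + 1 → P i) ↔ P t ∧ ∀ i : Fin T, (i : ℕ) < t → P i := by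
  constructor
  · intro h
    exact ⟨h t (Nat.lt_succ_self _), fun i hi => h i (hi.trans (Nat.lt_succ_self _))⟩
  · rintro ⟨ht, h⟩ i hi
    rcases Nat.lt_succ_iff_lt_or_eq.1 hi with hi | hi
    · exact h i hi
    · exact Fin.ext hi ▸ ht

variable (X : Fin T → Ω → 𝒳) (Y : Fin T → Ω → 𝒴)

lemma histRV_eq_iff (t : Fin T) (ω ω' : Ω) :
    histRV X Y t ω = histRV X Y t ω'
      ↔ (∀ i : Fin T, (i : ℕ) < t + 1 → X i ω = X i ω')
        ∧ ∀ i : Fin T, (i : ℕ) < t → Y i ω = Y i ω' := by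
  simp only [histRV, Prod.mk.injEq, castLE_comp_eq_iff]

lemma pastRV_eq_iff (t : Fin T) (ω ω' : Ω) :
    pastRV X Y t ω = pastRV X Y t ω'
      ↔ (∀ i : Fin T, (i : ℕ) < t → X i ω = X i ω') ∧ ∀ i : Fin T, (i : ℕ) < t → Y i ω = Y i ω' := by
  simp only [pastRV, Prod.mk.injEq, castLE_comp_eq_iff]

lemma prefixRV_eq_iff (k : ℕ) (ω ω' : Ω) :
    prefixRV X Y k ω = prefixRV X Y k ω'
      ↔ (∀ i : Fin T, (i : ℕ) < k → X i ω = X i ω') ∧ ∀ i : Fin T, (i : ℕ) < k → Y i ω = Y i ω' := by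
  simp only [prefixRV, funext_iff, ← forall_and]
  refine forall_congr' fun i => ?_
  by_cases hi : (i : ℕ) < k <;> simp [hi]

variable [Fintype Ω] [Fintype Θ] [Fintype 𝒳] [Fintype 𝒴] {p : Ω → ℝ} (θ : Ω → Θ)

lemma condMutualInfo_input_add_condMutualInfo_label (t : Fin T) :
    condMutualInfo p (X t) θ (pastRV X Y t) + condMutualInfo p θ (Y t) (histRV X Y t)
      = (entropy p (fun ω => (θ ω, prefixRV X Y t ω)) - entropy p (prefixRV X Y t))
        - (entropy p (fun ω => (θ ω, prefixRV X Y (t + 1) ω))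
          - entropy p (prefixRV X Y (t + 1))) := by
  unfold condMutualInfo
  rw [entropy_eq_of_fibers (X := fun ω => (X t ω, pastRV X Y t ω)) (X' := histRV X Y t) ?_,
    entropy_eq_of_fibers (X := fun ω => (θ ω, pastRV X Y t ω))
      (X' := fun ω => (θ ω, prefixRV X Y t ω)) ?_,
    entropy_eq_of_fibers (X := fun ω => ((X t ω, θ ω), pastRV X Y t ω))
      (X' := fun ω => (θ ω, histRV X Y t ω)) ?_,
    entropy_eq_of_fibers (X := pastRV X Y t) (X' := prefixRV X Y t) ?_,
    entropy_eq_of_fibers (X := fun ω => (Y t ω, histRV X Y t ω))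
      (X' := prefixRV X Y (t + 1)) ?_,
    entropy_eq_of_fibers (X := fun ω => ((θ ω, Y t ω), histRV X Y t ω))
      (X' := fun ω => (θ ω, prefixRV X Y (t + 1) ω)) ?_]
  · ring
  all_goals
    intro ω ω'
    simp only [Prod.mk.injEq, histRV_eq_iff, pastRV_eq_iff, prefixRV_eq_iff,
      forall_val_lt_succ_iff] <;> tauto

theorem sum_condMutualInfo_input_add_condMutualInfo_label (hp1 : ∑ ω, p ω = 1) :
    ∑ t : Fin T,
        (condMutualInfo p (X t) θ (pastRV X Y t) + condMutualInfo p θ (Y t) (histRV X Y t))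
      = mutualInfo p θ (fun ω => ((fun i : Fin T => X i ω), (fun i : Fin T => Y i ω))) := by
  let g (k : ℕ) : ℝ :=
    entropy p (fun ω => (θ ω, prefixRV X Y k ω)) - entropy p (prefixRV X Y k)
  have hg : ∀ t : Fin T, condMutualInfo p (X t) θ (pastRV X Y t)
      + condMutualInfo p θ (Y t) (histRV X Y t) = g t - g (t + 1) :=
    condMutualInfo_input_add_condMutualInfo_label X Y θ
  have hD₀ : prefixRV X Y 0 = fun _ _ => none := by
    funext ω i
    simp [prefixRV]
  have hg₀ : g 0 = entropy p θ := by
    simp only [g, hD₀, entropy_const hp1, sub_zero]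
    exact entropy_eq_of_fibers fun ω ω' => by simp
  have hgT : g T = entropy p (fun ω => (θ ω, ((fun i : Fin T => X i ω), fun i : Fin T => Y i ω)))
      - entropy p (fun ω => ((fun i : Fin T => X i ω), fun i : Fin T => Y i ω)) := by
    simp only [g]
    congr 1 <;> exact entropy_eq_of_fibers fun ω ω' => by
      simp only [Prod.mk.injEq, prefixRV_eq_iff]
      simp [funext_iff]
  rw [Finset.sum_congr rfl fun t _ => hg t, Fin.sum_univ_eq_sum_range (fun k => g k - g (k + 1)),
    Finset.sum_range_sub', hg₀, hgT, mutualInfo]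
  ring

end ChainRule

theorem statement2_general {Ω Θ 𝒳 𝒴 : Type*} [Fintype Ω] [Fintype Θ] [Fintype 𝒳] [Fintype 𝒴]
    (p : Ω → ℝ) (hp0 : ∀ ω, 0 ≤ p ω) (hp1 : ∑ ω, p ω = 1)
    (T : ℕ)
    (θ : Ω → Θ) (X : Fin T → Ω → 𝒳) (Y : Fin T → Ω → 𝒴)
    (hinput : ∀ t : Fin T, condMutualInfo p (X t) θ (pastRV X Y t) = 0)
    (P' : ∀ t : Fin T, ((Fin ((t : ℕ) + 1) → 𝒳) × (Fin (t : ℕ) → 𝒴)) → 𝒴 → ℝ)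
    (hP' : ∀ t h, (∀ y, 0 ≤ P' t h y) ∧ ∑ y, P' t h y = 1) :
    (T : ℝ≥0∞)⁻¹ * ∑ t : Fin T, ∑ ω, ENNReal.ofReal (p ω) *
        klDivF (fun b => condPr p (Y t) (fun ω' => (θ ω', histRV X Y t ω')) b
                  (θ ω, histRV X Y t ω))
          (P' t (histRV X Y t ω))
      = ENNReal.ofReal (mutualInfo p θ
            (fun ω => ((fun i : Fin T => X i ω), (fun i : Fin T => Y i ω)))) / (T : ℝ≥0∞)
        + (T : ℝ≥0∞)⁻¹ * ∑ t : Fin T, ∑ ω, ENNReal.ofReal (p ω) *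
            klDivF (fun b => condPr p (Y t) (histRV X Y t) b (histRV X Y t ω))
              (P' t (histRV X Y t ω)) := by
  have chain : ∑ t : Fin T, condMutualInfo p θ (Y t) (histRV X Y t)
      = mutualInfo p θ (fun ω => ((fun i : Fin T => X i ω), (fun i : Fin T => Y i ω))) := by
    simpa only [hinput, zero_add] using sum_condMutualInfo_input_add_condMutualInfo_label X Y θ hp1
  rw [Finset.sum_congr rfl fun t _ =>
      sum_ofReal_mul_klDivF_condPr_pair hp0 θ (Y t) (histRV X Y t) (P' t) (hP' t),
    Finset.sum_add_distrib,
    ← ENNReal.ofReal_sum_of_nonneg fun t _ => condMutualInfo_nonneg hp0 θ (Y t) (histRV X Y t),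
    chain, mul_add, ENNReal.div_eq_inv_mul]

/-- loss of an arbitrary algorithm = optimal error + misspecification error. -/
theorem statement2 {Ω Θ 𝒳 𝒴 : Type*} [Fintype Ω] [Fintype Θ] [Fintype 𝒳] [Fintype 𝒴]
    (p : Ω → ℝ) (hp0 : ∀ ω, 0 ≤ p ω) (hp1 : ∑ ω, p ω = 1)
    (T : ℕ) (hT : 1 ≤ T)
    (θ : Ω → Θ) (X : Fin T → Ω → 𝒳) (Y : Fin T → Ω → 𝒴)
    (hinput : ∀ t : Fin T, condMutualInfo p (X t) θ (pastRV X Y t) = 0)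
    (P' : ∀ t : Fin T, ((Fin ((t : ℕ) + 1) → 𝒳) × (Fin (t : ℕ) → 𝒴)) → 𝒴 → ℝ)
    (hP' : ∀ t h, (∀ y, 0 ≤ P' t h y) ∧ ∑ y, P' t h y = 1) :
    (T : ℝ≥0∞)⁻¹ * ∑ t : Fin T, ∑ ω, ENNReal.ofReal (p ω) *
        klDivF (fun b => condPr p (Y t) (fun ω' => (θ ω', histRV X Y t ω')) b
                  (θ ω, histRV X Y t ω))
          (P' t (histRV X Y t ω))
      = ENNReal.ofReal (mutualInfo p θ
            (fun ω => ((fun i : Fin T => X i ω), (fun i : Fin T => Y i ω)))) / (T : ℝ≥0∞)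
        + (T : ℝ≥0∞)⁻¹ * ∑ t : Fin T, ∑ ω, ENNReal.ofReal (p ω) *
            klDivF (fun b => condPr p (Y t) (histRV X Y t) b (histRV X Y t ω))
              (P' t (histRV X Y t ω)) :=
  statement2_general p hp0 hp1 T θ X Y hinput P' hP'

end
end

section
/- For all real numbers x and y, (1/(1+e^{−x})) · ln( (1+e^{−y}) / (1+e^{−x}) ) + (1/(1+e^{x})) · ln( (1+e^{y}) / (1+e^{x}) ) ≤ (x − y)² / 8. Equivalently, the KL divergence between Bernoulli distributions with success probabilities σ(x) and σ(y), where σ is the logistic sigmoid, is at most one eighth of the squared difference of the logits. -/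
/-!
With the softplus `A t = log (1 + exp t)` one has `A' = σ` and `A'' = σ (1 - σ) ≤ 1/4`.
The left-hand side is the Bregman divergence `A y - A x - A' x (y - x)` of `A`, and a second
derivative bounded by `M` bounds a Bregman divergence by `M/2 · (y - x)²`, since `M/2 · t² - A`
is convex.
-/

open Real

lemma ConvexOn.add_mul_sub_le_of_hasDerivAt {S : Set ℝ} {f : ℝ → ℝ} {f' x y : ℝ}
    (hfc : ConvexOn ℝ S f) (hx : x ∈ S) (hy : y ∈ S) (hf : HasDerivAt f f' x) :
    f x + f' * (y - x) ≤ f y := by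
  rcases lt_trichotomy x y with hxy | rfl | hyx
  · have := hfc.le_slope_of_hasDerivAt hx hy hxy hf
    rw [slope_def_field, le_div_iff₀ (sub_pos.2 hxy)] at this
    linarith
  · simp
  · have := hfc.slope_le_of_hasDerivAt hy hx hyx hf
    rw [slope_def_field, div_le_iff₀ (sub_pos.2 hyx)] at this
    linarith

lemma sub_sub_mul_sub_le_of_hasDerivAt2_le {f f' f'' : ℝ → ℝ} {M : ℝ}
    (hf : ∀ t, HasDerivAt f (f' t) t) (hf' : ∀ t, HasDerivAt f' (f'' t) t)
    (hM : ∀ t, f'' t ≤ M)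
    (x y : ℝ) : f y - f x - f' x * (y - x) ≤ M / 2 * (y - x) ^ 2 := by
  have hg : ∀ t, HasDerivAt (fun s ↦ M / 2 * s ^ 2 - f s) (M * t - f' t) t := fun t ↦
    ((hasDerivAt_pow 2 t).const_mul (M / 2)).sub (hf t) |>.congr_deriv (by push_cast; ring)
  have hg' : ∀ t, HasDerivAt (fun s ↦ M * s - f' s) (M - f'' t) t := fun t ↦
    ((hasDerivAt_id' t).const_mul M).sub (hf' t) |>.congr_deriv (by ring)
  have hconvex : ConvexOn ℝ Set.univ (fun s ↦ M / 2 * s ^ 2 - f s) :=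
    convexOn_of_hasDerivWithinAt2_nonneg convex_univ
      (fun t _ ↦ (hg t).continuousAt.continuousWithinAt)
      (fun t _ ↦ (hg t).hasDerivWithinAt) (fun t _ ↦ (hg' t).hasDerivWithinAt)
      (fun t _ ↦ sub_nonneg.2 (hM t))
  have := hconvex.add_mul_sub_le_of_hasDerivAt (Set.mem_univ x) (Set.mem_univ y) (hg x)
  linear_combination this

noncomputable def softplus (t : ℝ) : ℝ := log (1 + exp t)

lemma hasDerivAt_softplus (t : ℝ) : HasDerivAt softplus (sigmoid t) t := by
  unfold softplus
  convert ((hasDerivAt_exp t).const_add 1).log (by positivity) using 1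
  rw [sigmoid_def, exp_neg]
  field_simp
  ring

lemma log_one_add_exp_neg (t : ℝ) : log (1 + exp (-t)) = softplus t - t := by
  rw [softplus, ← log_exp t, ← log_div (by positivity) (exp_pos t).ne', log_exp]
  congr 1
  rw [exp_neg]; field_simp; ring

lemma sigmoid_mul_one_sub_sigmoid_le (t : ℝ) : sigmoid t * (1 - sigmoid t) ≤ 1 / 4 := by
  nlinarith [sq_nonneg (sigmoid t - 1 / 2)]

lemma one_div_one_add_exp_eq_one_sub_sigmoid (t : ℝ) : 1 / (1 + exp t) = 1 - sigmoid t := by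
  rw [← sigmoid_neg, sigmoid_def, neg_neg, one_div]

lemma klBernoulli_sigmoid_eq (x y : ℝ) :
    (1 / (1 + exp (-x))) * log ((1 + exp (-y)) / (1 + exp (-x)))
      + (1 / (1 + exp x)) * log ((1 + exp y) / (1 + exp x))
      = softplus y - softplus x - sigmoid x * (y - x) := by
  rw [log_div (by positivity) (by positivity), log_div (by positivity) (by positivity),
    log_one_add_exp_neg, log_one_add_exp_neg, one_div_one_add_exp_eq_one_sub_sigmoid x, one_div,
    ← sigmoid_def]
  unfold softplus
  ring

/-- squared error upper bounds binary KL divergence. -/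
theorem statement11 (x y : ℝ) :
    (1 / (1 + Real.exp (-x))) * Real.log ((1 + Real.exp (-y)) / (1 + Real.exp (-x)))
      + (1 / (1 + Real.exp x)) * Real.log ((1 + Real.exp y) / (1 + Real.exp x))
      ≤ (x - y) ^ 2 / 8 := by
  rw [klBernoulli_sigmoid_eq]
  have := sub_sub_mul_sub_le_of_hasDerivAt2_le hasDerivAt_softplus hasDerivAt_sigmoid
    sigmoid_mul_one_sub_sigmoid_le x y
  linear_combination this
end

section
/- Fix positive integers n, K, N and define real numbers C_m(j) for positive integers m and j by the recursion C_1(j) = ∑_{i=j}^{n−1} (K/N)/(K+i) and C_{m+1}(j) = ∑_{i=j}^{n−1} (K/N)/(K+i) · C_m(i+1) (empty sums are 0). Then for all positive integers m and j with j < n and j + m ≤ n + 1: (1/m!) · (K/N)^m · ( ln( (K+n)/(K+m−1+j) ) )^m ≤ C_m(j) ≤ (1/m!) · (K/N)^m · ( ln( (K+n)/(K−1+j) ) )^m. -/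
/-!
With `w i = (K/N)/(K+i)`, `C m j` is the nested sum `∑_{j ≤ i₁ < ⋯ < iₘ < n} w i₁ ⋯ w iₘ`, a
Riemann-sum analogue of `(∫ w)^m / m!`. If `wᵢ ≤ uᵢ - uᵢ₊₁`, the mean value bound for
`x ↦ x^(m+1)/(m+1)!` gives `wᵢ · uᵢ₊₁^m/m! ≤ uᵢ^(m+1)/(m+1)! - uᵢ₊₁^(m+1)/(m+1)!`, so induction on `m`
and telescoping give `C m j ≤ uⱼ^m/m!`. Symmetrically, if `wᵢ` dominates every later decrement of
`u` and `u` vanishes at `n + 1`, then `u_{j+m}^m/m! ≤ C m j`. For `u k = (K/N) log((K+n)/(K-1+k))`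
both hypotheses are the bounds `1/(x+1) ≤ log(x+1) - log x ≤ 1/x`.
-/

open Finset
open scoped Nat

lemma sub_mul_pow_div_factorial_le_sub {a b : ℝ} (hb : 0 ≤ b) (hba : b ≤ a) (m : ℕ) :
    (a - b) * (b ^ m / m !) ≤ a ^ (m + 1) / (m + 1)! - b ^ (m + 1) / (m + 1)! := by
  have bernoulli := pow_add_mul_le_add_pow hb (by linarith : 0 ≤ 2 * b + (a - b)) (m + 1)
  rw [add_sub_cancel, Nat.add_sub_cancel] at bernoulli
  calc (a - b) * (b ^ m / m !) = (m + 1 : ℕ) * b ^ m * (a - b) / (m + 1)! := by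
        rw [Nat.factorial_succ]; push_cast; field_simp
    _ ≤ (a ^ (m + 1) - b ^ (m + 1)) / (m + 1)! := by gcongr; linarith
    _ = _ := sub_div ..

lemma sub_pow_div_factorial_le_sub_mul {a b : ℝ} (hb : 0 ≤ b) (hba : b ≤ a) (m : ℕ) :
    a ^ (m + 1) / (m + 1)! - b ^ (m + 1) / (m + 1)! ≤ (a - b) * (a ^ m / m !) := by
  have bernoulli := pow_add_mul_le_add_pow (hb.trans hba) (by linarith : 0 ≤ 2 * a + (b - a)) (m + 1)
  rw [add_sub_cancel, Nat.add_sub_cancel] at bernoulli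
  calc a ^ (m + 1) / (m + 1)! - b ^ (m + 1) / (m + 1)! = (a ^ (m + 1) - b ^ (m + 1)) / (m + 1)! :=
        (sub_div ..).symm
    _ ≤ (m + 1 : ℕ) * a ^ m * (a - b) / (m + 1)! := by gcongr; linarith
    _ = (a - b) * (a ^ m / m !) := by rw [Nat.factorial_succ]; push_cast; field_simp

namespace Real

lemma inv_add_one_le_log_add_one_sub_log {x : ℝ} (hx : 0 < x) :
    (x + 1)⁻¹ ≤ log (x + 1) - log x := by
  have := one_sub_inv_le_log_of_pos (show 0 < (x + 1) / x by positivity)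
  rw [log_div (by positivity) hx.ne', inv_div] at this
  have : 1 - x / (x + 1) = (x + 1)⁻¹ := by field_simp; ring
  linarith

lemma log_add_one_sub_log_le_inv {x : ℝ} (hx : 0 < x) :
    log (x + 1) - log x ≤ x⁻¹ := by
  have := log_le_sub_one_of_pos (show 0 < (x + 1) / x by positivity)
  rw [log_div (by positivity) hx.ne'] at this
  have : (x + 1) / x - 1 = x⁻¹ := by field_simp; ring
  linarith

end Real

lemma Finset.sum_Ico_sub' {M : Type*} [AddCommGroup M] (f : ℕ → M) {a b : ℕ} (hab : a ≤ b) :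
    ∑ i ∈ Ico a b, (f i - f (i + 1)) = f a - f b := by
  rw [← neg_sub, ← sum_Ico_sub f hab, ← sum_neg_distrib]
  simp only [neg_sub]

/-- `nestedSum w n m j = ∑_{j ≤ i₁ < ⋯ < iₘ ≤ n - 1} w i₁ ⋯ w iₘ`, with the empty product `1` at
`m = 0`. -/
def nestedSum (w : ℕ → ℝ) (n : ℕ) : ℕ → ℕ → ℝ
  | 0, _ => 1
  | m + 1, j => ∑ i ∈ Ico j n, w i * nestedSum w n m (i + 1)

section NestedSum

variable {w u : ℕ → ℝ} {a n : ℕ}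

lemma eq_nestedSum_of_rec {C : ℕ → ℕ → ℝ} (hbase : ∀ j, C 1 j = ∑ i ∈ Ico j n, w i)
    (hrec : ∀ m j, 1 ≤ m → C (m + 1) j = ∑ i ∈ Ico j n, w i * C m (i + 1)) :
    ∀ m, 1 ≤ m → C m = nestedSum w n m
  | 1, _ => funext fun j => by simp [hbase, nestedSum]
  | m + 2, _ => funext fun j => by
      rw [hrec (m + 1) j (by omega), eq_nestedSum_of_rec hbase hrec (m + 1) (by omega), nestedSum]

lemma nestedSum_nonneg (hw : ∀ i ∈ Ico a n, 0 ≤ w i) : ∀ m j, a ≤ j → 0 ≤ nestedSum w n m j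
  | 0, _, _ => zero_le_one
  | m + 1, j, hj => sum_nonneg fun i hi =>
      mul_nonneg (hw i (Ico_subset_Ico_left hj hi)) (nestedSum_nonneg hw m (i + 1) (by grind))

lemma nestedSum_le_pow_div_factorial (hw : ∀ i ∈ Ico a n, 0 ≤ w i ∧ w i ≤ u i - u (i + 1))
    (hu : ∀ k ∈ Icc a n, 0 ≤ u k) :
    ∀ m j, a ≤ j → j ≤ n → nestedSum w n m j ≤ u j ^ m / m !
  | 0, _, _, _ => by simp [nestedSum]
  | m + 1, j, hj, hjn => by
    have step : ∀ i ∈ Ico j n, w i * nestedSum w n m (i + 1) ≤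
        u i ^ (m + 1) / (m + 1)! - u (i + 1) ^ (m + 1) / (m + 1)! := by
      intro i hi
      obtain ⟨hji, hin⟩ := mem_Ico.mp hi
      obtain ⟨hw0, hwu⟩ := hw i (mem_Ico.mpr ⟨hj.trans hji, hin⟩)
      have hu1 : 0 ≤ u (i + 1) := hu (i + 1) (mem_Icc.mpr ⟨by omega, hin⟩)
      calc w i * nestedSum w n m (i + 1) ≤ (u i - u (i + 1)) * (u (i + 1) ^ m / m !) :=
            mul_le_mul hwu (nestedSum_le_pow_div_factorial hw hu m (i + 1) (by omega) hin)
              (nestedSum_nonneg (fun i hi => (hw i hi).1) m (i + 1) (by omega)) (by linarith)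
        _ ≤ _ := sub_mul_pow_div_factorial_le_sub hu1 (by linarith) m
    have hun : 0 ≤ u n ^ (m + 1) / (m + 1)! := by
      have := hu n (mem_Icc.mpr ⟨hj.trans hjn, le_rfl⟩); positivity
    calc nestedSum w n (m + 1) j
        ≤ ∑ i ∈ Ico j n, (u i ^ (m + 1) / (m + 1)! - u (i + 1) ^ (m + 1) / (m + 1)!) :=
          sum_le_sum step
      _ = u j ^ (m + 1) / (m + 1)! - u n ^ (m + 1) / (m + 1)! :=
          sum_Ico_sub' (fun i => u i ^ (m + 1) / (m + 1)!) hjn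
      _ ≤ u j ^ (m + 1) / (m + 1)! := by linarith

lemma pow_div_factorial_le_nestedSum (hw : ∀ i ∈ Ico a n, 0 ≤ w i)
    (hwu : ∀ i k, a ≤ i → i < k → k ≤ n → u k - u (k + 1) ≤ w i)
    (hu : ∀ k ∈ Icc a n, 0 ≤ u (k + 1) ∧ u (k + 1) ≤ u k) (hun : u (n + 1) = 0) :
    ∀ m j, a ≤ j → j + m ≤ n + 1 → u (j + m) ^ m / m ! ≤ nestedSum w n m j
  | 0, _, _, _ => by simp [nestedSum]
  | m + 1, j, hj, hjm => by
    set f : ℕ → ℝ := fun i => u (i + (m + 1)) ^ (m + 1) / (m + 1)!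
    have step : ∀ i ∈ Ico j (n - m), f i - f (i + 1) ≤ w i * nestedSum w n m (i + 1) := by
      intro i hi
      obtain ⟨hji, hin⟩ := mem_Ico.mp hi
      set k := i + (m + 1)
      have ih : u k ^ m / m ! ≤ nestedSum w n m (i + 1) := by
        simpa [k, add_right_comm _ 1 m, add_assoc] using
          pow_div_factorial_le_nestedSum hw hwu hu hun m (i + 1) (by omega) (by omega)
      obtain ⟨huk1, huk⟩ := hu k (mem_Icc.mpr ⟨by omega, by omega⟩)
      calc f i - f (i + 1) ≤ (u k - u (k + 1)) * (u k ^ m / m !) := by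
            simpa only [f, k, add_right_comm _ 1 (m + 1)] using
              sub_pow_div_factorial_le_sub_mul huk1 huk m
        _ ≤ w i * nestedSum w n m (i + 1) :=
            mul_le_mul (hwu i k (by omega) (by omega) (by omega)) ih
              (by have := huk1.trans huk; positivity) (hw i (mem_Ico.mpr ⟨by omega, by omega⟩))
    calc u (j + (m + 1)) ^ (m + 1) / (m + 1)! = f j - f (n - m) := by
          simp [f, show n - m + (m + 1) = n + 1 by omega, hun]
      _ = ∑ i ∈ Ico j (n - m), (f i - f (i + 1)) := (sum_Ico_sub' f (by omega)).symm
      _ ≤ ∑ i ∈ Ico j (n - m), w i * nestedSum w n m (i + 1) := sum_le_sum step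
      _ ≤ nestedSum w n (m + 1) j :=
          sum_le_sum_of_subset_of_nonneg (Ico_subset_Ico_right (by omega)) fun i hi _ =>
            mul_nonneg (hw i (Ico_subset_Ico_left hj hi)) (nestedSum_nonneg hw m (i + 1) (by grind))

end NestedSum

section Harmonic

open Real

variable {κ c : ℝ} {n : ℕ}

lemma nestedSum_harmonic_le (hκ : 0 < κ) (hc : 0 ≤ c) {m j : ℕ} (hj : 1 ≤ j) (hjn : j ≤ n) :
    nestedSum (fun i => c / (κ + i)) n m j ≤ (c * log ((κ + n) / (κ - 1 + j))) ^ m / m ! := by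
  set u : ℕ → ℝ := fun k => c * (log (κ + n) - log (κ - 1 + k))
  have hu : ∀ k ∈ Icc 1 n, 0 ≤ u k := by
    intro k hk
    have : (1 : ℝ) ≤ k := by exact_mod_cast (mem_Icc.mp hk).1
    have : (k : ℝ) ≤ n := by exact_mod_cast (mem_Icc.mp hk).2
    exact mul_nonneg hc (sub_nonneg.mpr (log_le_log (by linarith) (by linarith)))
  have hw : ∀ i ∈ Ico 1 n, 0 ≤ c / (κ + i) ∧ c / (κ + i) ≤ u i - u (i + 1) := by
    intro i hi
    have : (1 : ℝ) ≤ i := by exact_mod_cast (mem_Ico.mp hi).1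
    have hx : κ - 1 + ↑(i + 1) = (κ - 1 + i) + 1 := by push_cast; ring
    refine ⟨by positivity, ?_⟩
    calc c / (κ + i) = c * (κ - 1 + i + 1)⁻¹ := by ring
      _ ≤ c * (log (κ - 1 + i + 1) - log (κ - 1 + i)) :=
          mul_le_mul_of_nonneg_left (inv_add_one_le_log_add_one_sub_log (by linarith)) hc
      _ = u i - u (i + 1) := by simp only [u, hx]; ring
  have hj' : (1 : ℝ) ≤ j := by exact_mod_cast hj
  rw [log_div (by positivity) (by linarith)]
  exact nestedSum_le_pow_div_factorial hw hu m j hj hjn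

lemma pow_div_factorial_le_nestedSum_harmonic (hκ : 0 < κ) (hc : 0 ≤ c) {m j : ℕ} (hj : 1 ≤ j)
    (hjm : j + m ≤ n + 1) :
    (c * log ((κ + n) / (κ + m - 1 + j))) ^ m / m ! ≤ nestedSum (fun i => c / (κ + i)) n m j := by
  set u : ℕ → ℝ := fun k => c * (log (κ + n) - log (κ - 1 + k))
  have hsucc : ∀ k : ℕ, κ - 1 + ↑(k + 1) = (κ - 1 + k) + 1 := fun k => by push_cast; ring
  have hw : ∀ i ∈ Ico 1 n, 0 ≤ c / (κ + i) := fun i _ => by positivity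
  have hwu : ∀ i k, 1 ≤ i → i < k → k ≤ n → u k - u (k + 1) ≤ c / (κ + i) := by
    intro i k hi hik _
    have : (i : ℝ) + 1 ≤ k := by exact_mod_cast hik
    calc u k - u (k + 1) = c * (log (κ - 1 + k + 1) - log (κ - 1 + k)) := by
          simp only [u, hsucc]; ring
      _ ≤ c * (κ - 1 + k)⁻¹ :=
          mul_le_mul_of_nonneg_left (log_add_one_sub_log_le_inv (by linarith)) hc
      _ ≤ c * (κ + i)⁻¹ := mul_le_mul_of_nonneg_left (inv_anti₀ (by positivity) (by linarith)) hc
      _ = c / (κ + i) := by ring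
  have hu : ∀ k ∈ Icc 1 n, 0 ≤ u (k + 1) ∧ u (k + 1) ≤ u k := by
    intro k hk
    have : (1 : ℝ) ≤ k := by exact_mod_cast (mem_Icc.mp hk).1
    have : (k : ℝ) ≤ n := by exact_mod_cast (mem_Icc.mp hk).2
    simp only [u, hsucc]
    constructor
    · exact mul_nonneg hc (sub_nonneg.mpr (log_le_log (by linarith) (by linarith)))
    · exact mul_le_mul_of_nonneg_left
        (sub_le_sub_left (log_le_log (by linarith) (by linarith)) _) hc
  have hun : u (n + 1) = 0 := by simp only [u, hsucc]; ring_nf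
  have hj' : (1 : ℝ) ≤ j := by exact_mod_cast hj
  have hm' : (0 : ℝ) ≤ m := m.cast_nonneg
  rw [log_div (by positivity) (by linarith)]
  convert pow_div_factorial_le_nestedSum hw hwu hu hun m j hj hjm using 4
  push_cast
  ring_nf

end Harmonic

theorem statement14_general (n K N : ℕ) (hK : 0 < K)
    (C : ℕ → ℕ → ℝ)
    (hbase : ∀ j : ℕ, C 1 j = ∑ i ∈ Finset.Ico j n, ((K : ℝ) / N) / ((K : ℝ) + i))
    (hrec : ∀ (m j : ℕ), 1 ≤ m →
      C (m + 1) j = ∑ i ∈ Finset.Ico j n, (((K : ℝ) / N) / ((K : ℝ) + i)) * C m (i + 1)) :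
    ∀ (m j : ℕ), 1 ≤ m → 1 ≤ j → j < n → j + m ≤ n + 1 →
      (1 / (Nat.factorial m : ℝ)) * ((K : ℝ) / N) ^ m *
          (Real.log (((K : ℝ) + n) / ((K : ℝ) + m - 1 + j))) ^ m ≤ C m j ∧
      C m j ≤ (1 / (Nat.factorial m : ℝ)) * ((K : ℝ) / N) ^ m *
          (Real.log (((K : ℝ) + n) / ((K : ℝ) - 1 + j))) ^ m := by
  intro m j hm hj hjn hjm
  have hκ : (0 : ℝ) < K := by exact_mod_cast hK
  have hc : (0 : ℝ) ≤ K / N := by positivity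
  rw [eq_nestedSum_of_rec hbase hrec m hm]
  constructor
  · calc _ = ((K : ℝ) / N * Real.log ((K + n) / (K + m - 1 + j))) ^ m / m ! := by ring
      _ ≤ _ := pow_div_factorial_le_nestedSum_harmonic hκ hc hj hjm
  · calc _ ≤ ((K : ℝ) / N * Real.log ((K + n) / (K - 1 + j))) ^ m / m ! :=
          nestedSum_harmonic_le hκ hc hj hjn.le
      _ = _ := by ring

/-- bounds on the multinomial nested sums `C_m(j)`. -/
theorem statement14 (n K N : ℕ) (hn : 0 < n) (hK : 0 < K) (hN : 0 < N)
    (C : ℕ → ℕ → ℝ)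
    (hbase : ∀ j : ℕ, C 1 j = ∑ i ∈ Finset.Ico j n, ((K : ℝ) / N) / ((K : ℝ) + i))
    (hrec : ∀ (m j : ℕ), 1 ≤ m →
      C (m + 1) j = ∑ i ∈ Finset.Ico j n, (((K : ℝ) / N) / ((K : ℝ) + i)) * C m (i + 1)) :
    ∀ (m j : ℕ), 1 ≤ m → 1 ≤ j → j < n → j + m ≤ n + 1 →
      (1 / (Nat.factorial m : ℝ)) * ((K : ℝ) / N) ^ m *
          (Real.log (((K : ℝ) + n) / ((K : ℝ) + m - 1 + j))) ^ m ≤ C m j ∧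
      C m j ≤ (1 / (Nat.factorial m : ℝ)) * ((K : ℝ) / N) ^ m *
          (Real.log (((K : ℝ) + n) / ((K : ℝ) - 1 + j))) ^ m :=
  statement14_general n K N hK C hbase hrec
end

section
/- For all positive integers i, n, K, N such that 2 ≤ K, K² ≤ N, and n ≤ N, one has (1/(2i)!) · (K/N)^{2i} · ( ln( (K+n)/(K−1) ) )^{2i} − (1/(2i+1)!) · (K/N)^{2i+1} · ( ln( (K+n)/(K+2i) ) )^{2i+1} ≥ 0. -/
/-!
Put `c = K/N`, `x = c·log((K+n)/(K-1))` and `y = c·log((K+n)/(K+2i))`; the two terms are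
`x^(2i)/(2i)!` and `y^(2i+1)/(2i+1)!`. Since `K + 2i ≥ K - 1 > 0` we have `y ≤ x`, and
`log((K+n)/(K+2i)) ≤ n/K` gives `y ≤ n/N ≤ 1`. For `y ≤ 0` the odd power is nonpositive; for
`0 < y ≤ 1` we have `y^(2i+1)/(2i+1)! ≤ y^(2i)/(2i)! ≤ x^(2i)/(2i)!`.
-/

open Real

theorem pow_succ_div_factorial_le_of_even {x y : ℝ} {k : ℕ} (hk : Even k) (hyx : y ≤ x)
    (hy1 : y ≤ 1) : y ^ (k + 1) / (k + 1).factorial ≤ x ^ k / k.factorial := by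
  rcases le_or_gt y 0 with hy | hy
  · calc y ^ (k + 1) / (k + 1).factorial ≤ 0 :=
          div_nonpos_of_nonpos_of_nonneg (hk.add_one.pow_nonpos hy) (by positivity)
      _ ≤ x ^ k / k.factorial := div_nonneg (hk.pow_nonneg x) (by positivity)
  · have hfac : (k.factorial : ℝ) ≤ (k + 1).factorial := by
      exact_mod_cast Nat.factorial_le k.le_succ
    calc y ^ (k + 1) / (k + 1).factorial ≤ y ^ (k + 1) / k.factorial :=
          div_le_div_of_nonneg_left (by positivity) (by positivity) hfac
      _ ≤ y ^ k / k.factorial := by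
          gcongr ?_ / _
          exact pow_le_pow_of_le_one hy.le hy1 k.le_succ
      _ ≤ x ^ k / k.factorial := by gcongr

theorem log_add_div_le_div {a b d : ℝ} (ha : 0 < a) (hb : 0 ≤ b) (had : a ≤ d) :
    log ((a + b) / d) ≤ b / a :=
  calc log ((a + b) / d) ≤ (a + b) / d - 1 :=
        log_le_sub_one_of_pos (by have := ha.trans_le had; positivity)
    _ ≤ (a + b) / a - 1 := by gcongr
    _ = b / a := by field_simp; ring

theorem statement15_general (i n K N : ℕ) (hK : 2 ≤ K)
    (hnN : n ≤ N) :
    0 ≤ (1 / (Nat.factorial (2 * i) : ℝ)) * ((K : ℝ) / N) ^ (2 * i) *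
          (Real.log (((K : ℝ) + n) / ((K : ℝ) - 1))) ^ (2 * i)
        - (1 / (Nat.factorial (2 * i + 1) : ℝ)) * ((K : ℝ) / N) ^ (2 * i + 1) *
          (Real.log (((K : ℝ) + n) / ((K : ℝ) + 2 * i))) ^ (2 * i + 1) := by
  have hK2 : (2 : ℝ) ≤ K := by exact_mod_cast hK
  have hi : (0 : ℝ) ≤ i := i.cast_nonneg
  set c : ℝ := K / N
  have hc : 0 ≤ c := by positivity
  set x := c * log ((K + n) / (K - 1))
  set y := c * log ((K + n) / (K + 2 * i))
  have hyx : y ≤ x := by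
    refine mul_le_mul_of_nonneg_left (log_le_log (by positivity) ?_) hc
    exact div_le_div_of_nonneg_left (by positivity) (by linarith) (by linarith)
  have hy1 : y ≤ 1 :=
    calc y ≤ c * (n / K) :=
          mul_le_mul_of_nonneg_left
            (log_add_div_le_div (by linarith) (by positivity) (by linarith)) hc
      _ = n / N := by simp only [c]; field_simp
      _ ≤ 1 := div_le_one_of_le₀ (by exact_mod_cast hnN) (by positivity)
  have key := pow_succ_div_factorial_le_of_even (even_two_mul i) hyx hy1
  simp only [x, y, mul_pow] at key
  rw [sub_nonneg]
  convert key using 1 <;> ring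

theorem statement15 (i n K N : ℕ) (hi : 1 ≤ i) (hn : 1 ≤ n) (hK : 2 ≤ K)
    (hKN : K ^ 2 ≤ N) (hnN : n ≤ N) :
    0 ≤ (1 / (Nat.factorial (2 * i) : ℝ)) * ((K : ℝ) / N) ^ (2 * i) *
          (Real.log (((K : ℝ) + n) / ((K : ℝ) - 1))) ^ (2 * i)
        - (1 / (Nat.factorial (2 * i + 1) : ℝ)) * ((K : ℝ) / N) ^ (2 * i + 1) *
          (Real.log (((K : ℝ) + n) / ((K : ℝ) + 2 * i))) ^ (2 * i + 1) :=
  statement15_general i n K N hK hnN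
end
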